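/- If z, w ∈ Z[1/√2, i] satisfy |z|² + |w|² = 1 and sde(z, √2) ≥ 1, then sde(z, √2) = sde(w, √2), and setting x = z(√2)^{sde(z)}, y = w(√2)^{sde(w)} ∈ Z[ω], one has gde(|x|², √2) = gde(|y|², √2) ≤ 1. -/

import Mathlib

noncomputable section

open Complex

/-- The eighth root of unity ω = e^{iπ/4}. -/
def omg : ℂ := Complex.exp (Real.pi * Complex.I / 4)

/-- √2 as a complex number. -/
def rt2 : ℂ := (Real.sqrt 2 : ℝ)

/-- Membership in the ring Z[ω] = {a + bω + cω² + dω³ : a,b,c,d ∈ ℤ}. -/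
def Zomega (z : ℂ) : Prop :=
  ∃ a b c d : ℤ, z = a + b * omg + c * omg ^ 2 + d * omg ^ 3

/-- Membership in the ring Z[1/√2, i] = {u/(√2)^n : u ∈ Z[ω], n ∈ ℕ}. -/
def ZRoot2i (z : ℂ) : Prop :=
  ∃ u : ℂ, Zomega u ∧ ∃ n : ℕ, z = u / rt2 ^ n

/-- `b` divides `z` within the ring Z[ω]. -/
def ZDvd (b z : ℂ) : Prop := ∃ q : ℂ, Zomega q ∧ z = b * q

/-- `k` is the greatest dividing exponent of base `b` with respect to `z`:
`b^k` divides `z` in Z[ω], while `b^(k+1)` does not. -/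
def IsGde (b z : ℂ) (k : ℕ) : Prop := ZDvd (b ^ k) z ∧ ¬ ZDvd (b ^ (k + 1)) z

/-- `k` is the smallest denominator exponent of base √2 with respect to `z`:
the smallest integer `k` such that `z·(√2)^k ∈ Z[ω]`. -/
def IsSde (z : ℂ) (k : ℤ) : Prop :=
  Zomega (z * rt2 ^ k) ∧ ∀ j : ℤ, Zomega (z * rt2 ^ j) → k ≤ j

/-!
Write `x = z √2^k = a + bω + cω² + dω³`. Then `|x|² = P + Q√2` lies in `ℤ[√2]`, with
`P = a² + b² + c² + d²` and `Q = ab + bc + cd - da`. Minimality of `k` says exactly that `√2 ∤ x`,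
i.e. not both `a ≡ c` and `b ≡ d` mod 2, and a check mod 2 then shows `2 ∤ P + Q√2` in `ℤ[√2]`.

Multiplying `|z|² + |w|² = 1` by `2^max(kz, kw)` gives an identity in `ℤ[√2]`; if the exponents
differed, the `|x|²` of the larger exponent (which is `≥ 1`) would be divisible by `2`. So
`kz = kw = k` and `|x|² + |y|² = 2^k`, whence `P_x ≡ P_y` mod 2. Finally the `√2`-adic valuation of
`P + Q√2` is `0` if `P` is odd, and `1` if `P` is even (then `Q` is odd).
-/

lemma rt2_sq : rt2 ^ 2 = 2 := by
  rw [rt2, ← Complex.ofReal_pow, Real.sq_sqrt zero_le_two]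
  norm_num

lemma rt2_ne_zero : rt2 ≠ 0 := by
  simp [rt2]

lemma conj_rt2 : (starRingEnd ℂ) rt2 = rt2 :=
  Complex.conj_ofReal _

lemma omg_eq : omg = rt2 / 2 * (1 + I) := by
  rw [omg, show (Real.pi : ℂ) * I / 4 = ((Real.pi / 4 : ℝ) : ℂ) * I by push_cast; ring,
    Complex.exp_mul_I, ← Complex.ofReal_cos, ← Complex.ofReal_sin,
    Real.cos_pi_div_four, Real.sin_pi_div_four, rt2]
  push_cast
  ring

lemma omg_sq : omg ^ 2 = I := by
  rw [omg_eq]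
  linear_combination ((1 + I) ^ 2 / 4) * rt2_sq + (1 / 2) * I_sq

lemma omg_pow_four : omg ^ 4 = -1 := by
  rw [show omg ^ 4 = (omg ^ 2) ^ 2 by ring, omg_sq, I_sq]

lemma rt2_eq : rt2 = omg - omg ^ 3 := by
  rw [pow_succ, omg_sq, omg_eq]
  linear_combination (rt2 / 2) * I_sq

lemma conj_omg : (starRingEnd ℂ) omg = -omg ^ 3 := by
  rw [pow_succ, omg_sq, omg_eq]
  simp only [map_mul, map_div₀, map_add, map_one, map_ofNat, conj_rt2, Complex.conj_I]
  linear_combination (rt2 / 2) * I_sq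

lemma rt2_mul (e f g h : ℂ) :
    rt2 * (e + f * omg + g * omg ^ 2 + h * omg ^ 3)
      = (f - h) + (e + g) * omg + (f + h) * omg ^ 2 + (g - e) * omg ^ 3 := by
  rw [rt2_eq]
  linear_combination ((h - f) - g * omg - h * omg ^ 2) * omg_pow_four

lemma int_add_mul_rt2_eq (p q : ℤ) :
    (p : ℂ) + q * rt2 = p + q * omg + (0 : ℤ) * omg ^ 2 + (-q : ℤ) * omg ^ 3 := by
  rw [rt2_eq]
  push_cast
  ring

lemma zomega_int_add_mul_rt2 (p q : ℤ) : Zomega (p + q * rt2) :=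
  ⟨p, q, 0, -q, int_add_mul_rt2_eq p q⟩

lemma int_eq_zero_of_add_mul_sqrt_two_eq_zero {p q : ℤ} (h : (p : ℝ) + q * √2 = 0) :
    p = 0 ∧ q = 0 := by
  obtain rfl : q = 0 := by
    by_contra hq
    refine irrational_sqrt_two ⟨-p / q, ?_⟩
    have : (q : ℝ) ≠ 0 := Int.cast_ne_zero.mpr hq
    push_cast
    field_simp
    linarith
  exact ⟨by simpa using h, rfl⟩

lemma coeffs_eq_zero_of_eq_zero {a b c d : ℤ}
    (h : (a : ℂ) + b * omg + c * omg ^ 2 + d * omg ^ 3 = 0) :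
    a = 0 ∧ b = 0 ∧ c = 0 ∧ d = 0 := by
  have hE : (a : ℂ) + b * omg + c * omg ^ 2 + d * omg ^ 3
      = ((a + (b - d) * √2 / 2 : ℝ) : ℂ) + ((c + (b + d) * √2 / 2 : ℝ) : ℂ) * I := by
    rw [show omg ^ 3 = omg ^ 2 * omg by ring, omg_sq, omg_eq, rt2]
    push_cast
    linear_combination ((d : ℂ) * √2 / 2) * I_sq
  rw [hE, Complex.ext_iff] at h
  simp only [add_re, ofReal_re, mul_re, I_re, mul_zero, ofReal_im, I_im, mul_one, sub_self,
    add_zero, zero_re, add_im, mul_im, zero_add, zero_im] at h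
  obtain ⟨ha, hbd⟩ := int_eq_zero_of_add_mul_sqrt_two_eq_zero (p := 2 * a) (q := b - d)
    (by push_cast; linarith [h.1])
  obtain ⟨hc, hbd'⟩ := int_eq_zero_of_add_mul_sqrt_two_eq_zero (p := 2 * c) (q := b + d)
    (by push_cast; linarith [h.2])
  omega

lemma coeffs_eq_of_eq {a b c d a' b' c' d' : ℤ}
    (h : (a : ℂ) + b * omg + c * omg ^ 2 + d * omg ^ 3
      = a' + b' * omg + c' * omg ^ 2 + d' * omg ^ 3) :
    a = a' ∧ b = b' ∧ c = c' ∧ d = d' := by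
  have := coeffs_eq_zero_of_eq_zero (a := a - a') (b := b - b') (c := c - c') (d := d - d')
    (by push_cast; linear_combination h)
  omega

def zsqrtTwoToComplex : ℤ√2 →+* ℂ :=
  Zsqrtd.lift ⟨rt2, by rw [← sq, rt2_sq]; norm_num⟩

lemma zsqrtTwoToComplex_apply (x : ℤ√2) : zsqrtTwoToComplex x = x.re + x.im * rt2 := rfl

lemma zsqrtTwoToComplex_injective : Function.Injective zsqrtTwoToComplex :=
  Zsqrtd.lift_injective _ fun n hn => by
    have h2 : n.natAbs * n.natAbs = 2 := by
      zify; rw [abs_mul_abs_self]; exact hn.symm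
    have : n.natAbs < 2 := by nlinarith
    interval_cases n.natAbs <;> omega

lemma two_dvd_zsqrtd_iff (x : ℤ√2) : (2 : ℤ√2) ∣ x ↔ 2 ∣ x.re ∧ 2 ∣ x.im :=
  Zsqrtd.intCast_dvd 2 x

lemma conj_quad (a b c d : ℤ) :
    (starRingEnd ℂ) ((a : ℂ) + b * omg + c * omg ^ 2 + d * omg ^ 3)
      = a + (-d : ℤ) * omg + (-c : ℤ) * omg ^ 2 + (-b : ℤ) * omg ^ 3 := by
  simp only [map_add, map_mul, map_pow, map_intCast, conj_omg]
  push_cast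
  linear_combination ((c : ℂ) * omg ^ 2 - d * omg * (omg ^ 4 - 1)) * omg_pow_four

lemma quad_mul_conj (a b c d : ℤ) :
    ((a : ℂ) + b * omg + c * omg ^ 2 + d * omg ^ 3)
        * (starRingEnd ℂ) ((a : ℂ) + b * omg + c * omg ^ 2 + d * omg ^ 3)
      = zsqrtTwoToComplex ⟨a ^ 2 + b ^ 2 + c ^ 2 + d ^ 2, a * b + b * c + c * d - d * a⟩ := by
  rw [conj_quad, zsqrtTwoToComplex_apply, rt2_eq]
  push_cast
  linear_combination
    (-((b : ℂ) ^ 2 + c ^ 2 + d ^ 2) - (b * c + c * d) * omg - b * d * omg ^ 2) * omg_pow_four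

lemma not_two_dvd_quad_normSq {a b c d : ℤ} (h : ¬(2 ∣ a - c ∧ 2 ∣ b - d)) :
    ¬(2 : ℤ√2) ∣ ⟨a ^ 2 + b ^ 2 + c ^ 2 + d ^ 2, a * b + b * c + c * d - d * a⟩ := by
  rw [two_dvd_zsqrtd_iff]
  rintro ⟨hre, him⟩
  apply h
  have mod_two : ∀ a b c d : ZMod 2, a ^ 2 + b ^ 2 + c ^ 2 + d ^ 2 = 0 →
      a * b + b * c + c * d - d * a = 0 → c = a ∧ d = b := by
    decide
  obtain ⟨hac, hbd⟩ := mod_two a b c d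
    (by exact_mod_cast (ZMod.intCast_zmod_eq_zero_iff_dvd _ 2).mpr hre)
    (by exact_mod_cast (ZMod.intCast_zmod_eq_zero_iff_dvd _ 2).mpr him)
  exact ⟨(ZMod.intCast_eq_intCast_iff_dvd_sub c a 2).mp hac,
    (ZMod.intCast_eq_intCast_iff_dvd_sub d b 2).mp hbd⟩

lemma zdvd_rt2_iff (a b c d : ℤ) :
    ZDvd rt2 ((a : ℂ) + b * omg + c * omg ^ 2 + d * omg ^ 3) ↔ 2 ∣ a - c ∧ 2 ∣ b - d := by
  constructor
  · rintro ⟨_, ⟨e, f, g, h, rfl⟩, heq⟩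
    rw [rt2_mul] at heq
    obtain ⟨ha, hb, hc, hd⟩ := coeffs_eq_of_eq (a' := f - h) (b' := e + g) (c' := f + h)
      (d' := g - e) (by push_cast; exact heq)
    exact ⟨⟨-h, by omega⟩, ⟨e, by omega⟩⟩
  · rintro ⟨⟨s, hs⟩, ⟨t, ht⟩⟩
    refine ⟨_, ⟨t, c + s, d + t, -s, rfl⟩, ?_⟩
    rw [rt2_mul, show a = c + 2 * s by omega, show b = d + 2 * t by omega]
    push_cast
    ring

lemma zdvd_rt2_int_add_mul_rt2_iff (p q : ℤ) : ZDvd rt2 (p + q * rt2) ↔ 2 ∣ p := by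
  rw [int_add_mul_rt2_eq, zdvd_rt2_iff]
  omega

lemma IsSde.not_zdvd_rt2 {z : ℂ} {k : ℤ} (h : IsSde z k) : ¬ZDvd rt2 (z * rt2 ^ k) := by
  rintro ⟨q, hq, hzq⟩
  have hq' : z * rt2 ^ (k - 1) = q := by
    apply mul_left_cancel₀ rt2_ne_zero
    rw [← hzq, mul_left_comm, ← zpow_one_add₀ rt2_ne_zero, add_sub_cancel]
  have := h.2 (k - 1) (hq' ▸ hq)
  omega

lemma IsSde.exists_mul_conj_eq {z : ℂ} {k : ℤ} (h : IsSde z k) :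
    ∃ x : ℤ√2, ¬(2 : ℤ√2) ∣ x ∧
      z * rt2 ^ k * (starRingEnd ℂ) (z * rt2 ^ k) = zsqrtTwoToComplex x := by
  obtain ⟨a, b, c, d, hx⟩ := h.1
  refine ⟨_, not_two_dvd_quad_normSq ?_, by rw [hx, quad_mul_conj]⟩
  rw [← zdvd_rt2_iff, ← hx]
  exact h.not_zdvd_rt2

lemma mul_rt2_zpow_mul_conj (z : ℂ) (k : ℤ) :
    z * rt2 ^ k * (starRingEnd ℂ) (z * rt2 ^ k) = z * (starRingEnd ℂ) z * 2 ^ k := by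
  have h2 : (2 : ℂ) ^ k = rt2 ^ k * rt2 ^ k := by rw [← mul_zpow, ← sq, rt2_sq]
  rw [map_mul, map_zpow₀, conj_rt2, h2]
  ring

lemma isGde_rt2_zero (x : ℤ√2) (hx : ¬2 ∣ x.re) : IsGde rt2 (zsqrtTwoToComplex x) 0 := by
  refine ⟨⟨_, zomega_int_add_mul_rt2 x.re x.im, by rw [pow_zero, one_mul]; rfl⟩, ?_⟩
  rwa [zero_add, pow_one, zsqrtTwoToComplex_apply, zdvd_rt2_int_add_mul_rt2_iff]

lemma isGde_rt2_one (x : ℤ√2) (hx : ¬(2 : ℤ√2) ∣ x) (hre : 2 ∣ x.re) :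
    IsGde rt2 (zsqrtTwoToComplex x) 1 := by
  have him : ¬2 ∣ x.im := fun him => hx ((two_dvd_zsqrtd_iff x).mpr ⟨hre, him⟩)
  obtain ⟨p, hp⟩ := hre
  have hx_eq : zsqrtTwoToComplex x = rt2 * (x.im + p * rt2) := by
    rw [zsqrtTwoToComplex_apply, hp]
    push_cast
    linear_combination (-p : ℂ) * rt2_sq
  refine ⟨by rw [pow_one, hx_eq]; exact ⟨_, zomega_int_add_mul_rt2 _ _, rfl⟩, ?_⟩
  rintro ⟨q, hq, hxq⟩
  rw [hx_eq, pow_succ', pow_one, mul_assoc] at hxq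
  exact him ((zdvd_rt2_int_add_mul_rt2_iff _ _).mp ⟨q, hq, mul_left_cancel₀ rt2_ne_zero hxq⟩)

section

variable {u v : ℂ} {k l : ℤ} {x y : ℤ√2}

lemma add_mul_two_pow_eq (huv : u + v = 1) (hu : u * 2 ^ k = zsqrtTwoToComplex x)
    (hv : v * 2 ^ l = zsqrtTwoToComplex y) {n d : ℕ} (hk : k = n) (hd : k = l + d) :
    x + y * 2 ^ d = 2 ^ n :=
  zsqrtTwoToComplex_injective <| by
    calc zsqrtTwoToComplex (x + y * 2 ^ d) = u * 2 ^ k + v * 2 ^ l * 2 ^ d := by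
          simp only [map_add, map_mul, map_pow, map_ofNat, hu, hv]
      _ = (u + v) * 2 ^ k := by
          rw [hd, zpow_add₀ two_ne_zero, zpow_natCast]
          ring
      _ = zsqrtTwoToComplex (2 ^ n) := by
          rw [huv, one_mul, hk, zpow_natCast, map_pow, map_ofNat]

lemma le_of_add_eq_one (huv : u + v = 1) (hu : u * 2 ^ k = zsqrtTwoToComplex x)
    (hv : v * 2 ^ l = zsqrtTwoToComplex y) (hx : ¬(2 : ℤ√2) ∣ x) (hk : 1 ≤ k) :
    k ≤ l := by
  by_contra! hlt
  obtain ⟨n, hn⟩ : ∃ n : ℕ, k = n + 1 := ⟨(k - 1).toNat, by omega⟩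
  obtain ⟨d, hd⟩ : ∃ d : ℕ, k = l + (d + 1) := ⟨(k - l - 1).toNat, by omega⟩
  have hsum := add_mul_two_pow_eq huv hu hv (n := n + 1) (d := d + 1) (by push_cast; exact hn)
    (by push_cast; exact hd)
  refine hx ?_
  rw [eq_sub_of_add_eq hsum]
  exact dvd_sub (dvd_pow_self 2 n.succ_ne_zero)
    (dvd_mul_of_dvd_right (dvd_pow_self 2 d.succ_ne_zero) y)

end

theorem stmt9_general (z w : ℂ)
    (hunit : z * (starRingEnd ℂ) z + w * (starRingEnd ℂ) w = 1)
    (kz kw : ℤ) (hkz : IsSde z kz) (hkw : IsSde w kw) (h1 : 1 ≤ kz) :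
    kz = kw ∧
      ∃ j : ℕ, j ≤ 1 ∧
        IsGde rt2 ((z * rt2 ^ kz) * (starRingEnd ℂ) (z * rt2 ^ kz)) j ∧
        IsGde rt2 ((w * rt2 ^ kw) * (starRingEnd ℂ) (w * rt2 ^ kw)) j := by
  obtain ⟨x, hx, hxz⟩ := hkz.exists_mul_conj_eq
  obtain ⟨y, hy, hyw⟩ := hkw.exists_mul_conj_eq
  have hu := mul_rt2_zpow_mul_conj z kz ▸ hxz
  have hv := mul_rt2_zpow_mul_conj w kw ▸ hyw
  have hk : kz = kw := le_antisymm (le_of_add_eq_one hunit hu hv hx h1) <| by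
    by_contra! hlt
    exact hlt.not_ge (le_of_add_eq_one ((add_comm _ _).trans hunit) hv hu hy (by omega))
  subst hk
  obtain ⟨n, hn⟩ : ∃ n : ℕ, kz = n := ⟨kz.toNat, by omega⟩
  have hsum : x + y = 2 ^ n := by
    simpa using add_mul_two_pow_eq hunit hu hv (d := 0) hn (by simp)
  have hre : 2 ∣ x.re ↔ 2 ∣ y.re := by
    have := ((two_dvd_zsqrtd_iff _).mp (hsum ▸ dvd_pow_self 2 (by omega))).1
    rw [Zsqrtd.re_add] at this
    omega
  rw [hxz, hyw]
  by_cases hxre : 2 ∣ x.re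
  · exact ⟨rfl, 1, le_rfl, isGde_rt2_one x hx hxre, isGde_rt2_one y hy (hre.mp hxre)⟩
  · exact ⟨rfl, 0, zero_le_one, isGde_rt2_zero x hxre, isGde_rt2_zero y (hre.not.mp hxre)⟩

/-- If |z|² + |w|² = 1 and sde(z, √2) ≥ 1, then sde(z) = sde(w) and, for
x = z(√2)^{sde z}, y = w(√2)^{sde w}, one has gde(|x|², √2) = gde(|y|², √2) ≤ 1. -/
theorem stmt9 (z w : ℂ) (hz : ZRoot2i z) (hw : ZRoot2i w)
    (hunit : z * (starRingEnd ℂ) z + w * (starRingEnd ℂ) w = 1)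
    (kz kw : ℤ) (hkz : IsSde z kz) (hkw : IsSde w kw) (h1 : 1 ≤ kz) :
    kz = kw ∧
      ∃ j : ℕ, j ≤ 1 ∧
        IsGde rt2 ((z * rt2 ^ kz) * (starRingEnd ℂ) (z * rt2 ^ kz)) j ∧
        IsGde rt2 ((w * rt2 ^ kw) * (starRingEnd ℂ) (w * rt2 ^ kw)) j :=
  stmt9_general z w hunit kz kw hkz hkw h1
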